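/- arXiv:2409.00722 — 3 statements merged into one kernel-verified Lean document; each statement's English description precedes it below -/
import Mathlib

section
/- The two-point Hermite basis polynomial p_m^{u₁,u₂}(u) = (1/m!)·(u−u₁)^m·((u−u₂)/(u₁−u₂))^{r+1}·∑_{ℓ=0}^{r−m} C(r+ℓ, r)·((u−u₁)/(u₂−u₁))^ℓ satisfies p_m^{u₁,u₂}(u₁) delta conditions: its k-th derivative at u₁ equals δ_{km} for 0 ≤ k ≤ m, where u₁ ≠ u₂ and 0 ≤ m ≤ r. -/
open Polynomial in
private lemma iteratedDeriv_polyeval (p : ℝ[X]) (k : ℕ) :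
    iteratedDeriv k (fun x => p.eval x) = fun x => (derivative^[k] p).eval x := by
  induction k with
  | zero => simp
  | succ n ih =>
    rw [iteratedDeriv_succ, ih, Function.iterate_succ_apply']
    funext x
    exact Polynomial.deriv _

open Polynomial in
private lemma eval_iterate_deriv_root_mul (a : ℝ) (m k : ℕ) (Q : ℝ[X]) (hk : k ≤ m) :
    ((derivative^[k]) ((X - C a) ^ m * Q)).eval a
      = if k = m then (m.factorial : ℝ) * Q.eval a else 0 := by
  have h1 : ((derivative^[k]) ((X - C a) ^ m * Q)).eval a
      = (k.factorial : ℝ) * ((taylor a ((X - C a) ^ m * Q)).coeff k) := by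
    rw [← factorial_smul_hasseDeriv, taylor_coeff, LinearMap.smul_apply]
    simp [nsmul_eq_mul]
  have h2 : taylor a ((X - C a) ^ m * Q) = X ^ m * taylor a Q := by
    simp [taylor_apply, mul_comp, pow_comp, sub_comp]
  rw [h1, h2, mul_comm (X ^ m), coeff_mul_X_pow']
  rcases eq_or_lt_of_le hk with rfl | hlt
  · simp [taylor_coeff_zero, mul_comm]
  · simp [hlt.ne, hlt.not_ge]

/-- The two-point Hermite basis polynomial
`p_m^{u₁,u₂}(u) = (1/m!)(u-u₁)^m ((u-u₂)/(u₁-u₂))^{r+1} ∑_{ℓ=0}^{r-m} C(r+ℓ,r)((u-u₁)/(u₂-u₁))^ℓ`. -/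
noncomputable def hermiteBasis (r m : ℕ) (u₁ u₂ : ℝ) : ℝ → ℝ := fun u =>
  (1 / (m.factorial : ℝ)) * (u - u₁) ^ m * ((u - u₂) / (u₁ - u₂)) ^ (r + 1) *
    ∑ ℓ ∈ Finset.range (r - m + 1),
      ((r + ℓ).choose r : ℝ) * ((u - u₁) / (u₂ - u₁)) ^ ℓ

open Polynomial in
/-- The Hermite cardinal polynomial `p_m^{u₁,u₂}` satisfies the delta conditions at `u₁`:
its `k`-th derivative at `u₁` equals `δ_{km}` for `0 ≤ k ≤ m`. -/
theorem hermiteBasis_deriv_left (r m : ℕ) (u₁ u₂ : ℝ) (hne : u₁ ≠ u₂) (hm : m ≤ r) :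
    ∀ k ≤ m, iteratedDeriv k (hermiteBasis r m u₁ u₂) u₁ = if k = m then 1 else 0 := by
  intro k hk
  set Q : ℝ[X] := C (1 / (m.factorial : ℝ)) * ((X - C u₂) * C (1 / (u₁ - u₂))) ^ (r + 1) *
      ∑ ℓ ∈ Finset.range (r - m + 1),
        C (((r + ℓ).choose r : ℝ)) * ((X - C u₁) * C (1 / (u₂ - u₁))) ^ ℓ with hQ
  have hfun : hermiteBasis r m u₁ u₂ = fun u => ((X - C u₁) ^ m * Q).eval u := by
    funext u
    simp [hermiteBasis, hQ, eval_finset_sum, div_eq_mul_inv]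
    ring
  rw [hfun, iteratedDeriv_polyeval]
  beta_reduce
  rw [eval_iterate_deriv_root_mul u₁ m k Q hk]
  have h12 : u₁ - u₂ ≠ 0 := sub_ne_zero.mpr hne
  have hsum : ∑ x ∈ Finset.range (r - m + 1), ((r + x).choose r : ℝ) * (0 : ℝ) ^ x = 1 := by
    rw [Finset.sum_eq_single 0]
    · simp
    · intro b _ hb; simp [zero_pow hb]
    · simp
  have hQe : Q.eval u₁ = 1 / (m.factorial : ℝ) := by
    simp [hQ, eval_finset_sum, div_eq_mul_inv, mul_inv_cancel₀ h12, hsum]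
  rw [hQe]
  have hmf : (m.factorial : ℝ) ≠ 0 := Nat.cast_ne_zero.mpr m.factorial_ne_zero
  split <;> field_simp
end

section
/- (Trigonometric interpolation error bound) Let g be continuous, b-periodic, with Fourier coefficients c_ℓ(g), absolutely summable, and let τ(g)(x) = ∑_{ℓ=−N/2}^{N/2−1} c̃_ℓ(g)e^{2πiℓx/b} be the trigonometric interpolant of g at the N equispaced points jb/N. Then for all x ∈ ℝ, |g(x) − τ(g)(x)| ≤ 2·∑_{ℓ=−N/2}^{N/2−1} ∑_{m∈ℤ, m≠0} |c_{ℓ+Nm}(g)|. -/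
open Finset

private lemma norm_exp_one {t : ℂ} (r : ℝ) (h : t = (r:ℂ) * Complex.I) :
    ‖Complex.exp t‖ = 1 := by
  rw [h, Complex.norm_exp]
  simp

private lemma trig_geom (N : ℕ) (hN : 0 < N) (d : ℤ) :
    ∑ j ∈ Finset.range N, Complex.exp (2 * (Real.pi:ℂ) * Complex.I * (d:ℂ) / (N:ℂ)) ^ j
      = if (N:ℤ) ∣ d then (N:ℂ) else 0 := by
  have hNc : (N:ℂ) ≠ 0 := Nat.cast_ne_zero.mpr hN.ne'
  have hπ : ((Real.pi:ℝ):ℂ) ≠ 0 := Complex.ofReal_ne_zero.mpr Real.pi_ne_zero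
  split_ifs with hd
  · obtain ⟨m, rfl⟩ := hd
    have h1 : (2 * (Real.pi:ℂ) * Complex.I * ((((N:ℤ) * m : ℤ)):ℂ) / (N:ℂ))
        = (m:ℂ) * (2 * (Real.pi:ℂ) * Complex.I) := by
      push_cast
      field_simp
    rw [h1, Complex.exp_int_mul_two_pi_mul_I]
    simp
  · have hz : Complex.exp (2 * (Real.pi:ℂ) * Complex.I * (d:ℂ) / (N:ℂ)) ≠ 1 := by
      intro h1
      rw [Complex.exp_eq_one_iff] at h1
      obtain ⟨n, hn⟩ := h1
      apply hd
      have h2πI : (2 * (Real.pi:ℂ) * Complex.I) ≠ 0 :=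
        mul_ne_zero (mul_ne_zero two_ne_zero hπ) Complex.I_ne_zero
      field_simp at hn
      have h3 : (2 * (Real.pi:ℂ) * Complex.I) * (d:ℂ)
          = (2 * (Real.pi:ℂ) * Complex.I) * ((n:ℂ) * (N:ℂ)) := by
        linear_combination (2 * (Real.pi:ℂ) * Complex.I) * hn
      have h4 : (d:ℂ) = (n:ℂ) * (N:ℂ) := mul_left_cancel₀ h2πI h3
      have h5 : d = n * N := by exact_mod_cast h4
      exact ⟨n, h5.trans (mul_comm n N)⟩
    rw [geom_sum_eq hz]
    have hzN : Complex.exp (2 * (Real.pi:ℂ) * Complex.I * (d:ℂ) / (N:ℂ)) ^ N = 1 := by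
      rw [← Complex.exp_nat_mul]
      have h6 : (N:ℂ) * (2 * (Real.pi:ℂ) * Complex.I * (d:ℂ) / (N:ℂ))
          = (d:ℂ) * (2 * (Real.pi:ℂ) * Complex.I) := by
        field_simp
      rw [h6, Complex.exp_int_mul_two_pi_mul_I]
    rw [hzN]
    simp

private lemma trig_aux (c : ℤ → ℂ) (hsum : Summable fun ℓ : ℤ => ‖c ℓ‖)
    (N : ℕ) (hN : 0 < N) (hNe : Even N)
    (E : ℤ → ℂ) (hE : ∀ k, ‖E k‖ = 1)
    (G : ℂ) (hG : G = ∑' k : ℤ, c k * E k)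
    (tc : ℤ → ℂ) (htc : ∀ ℓ : ℤ, tc ℓ = ∑' m : ℤ, c (ℓ + (N:ℤ) * m)) :
    ‖G - ∑ ℓ ∈ Finset.Icc (-(N:ℤ)/2) ((N:ℤ)/2 - 1), tc ℓ * E ℓ‖ ≤
      2 * ∑ ℓ ∈ Finset.Icc (-(N:ℤ)/2) ((N:ℤ)/2 - 1),
        ∑' m : ℤ, if m = 0 then 0 else ‖c (ℓ + (N:ℤ) * m)‖ := by
  classical
  set Λ : Finset ℤ := Finset.Icc (-(N:ℤ)/2) ((N:ℤ)/2 - 1) with hΛ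
  have hNz : (N:ℤ) ≠ 0 := by exact_mod_cast hN.ne'
  have hNpos : (0:ℤ) < N := by exact_mod_cast hN
  have hNmod : (N:ℤ) % 2 = 0 := by
    obtain ⟨r, hr⟩ := hNe
    have : (N:ℤ) = (r:ℤ) + (r:ℤ) := by exact_mod_cast hr
    omega
  have hsc : Summable c := Summable.of_norm hsum
  have injN : ∀ ℓ : ℤ, Function.Injective fun m : ℤ => ℓ + (N:ℤ) * m := by
    intro ℓ m m' h
    simp only at h
    exact mul_left_cancel₀ hNz (add_left_cancel h)
  have huniq : ∀ k ℓ ℓ' : ℤ, ℓ ∈ Λ → ℓ' ∈ Λ → (N:ℤ) ∣ (k - ℓ) → (N:ℤ) ∣ (k - ℓ') → ℓ = ℓ' := by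
    intro k ℓ ℓ' hℓ hℓ' hd hd'
    obtain ⟨a, ha⟩ := hd
    obtain ⟨a', ha'⟩ := hd'
    rw [hΛ, Finset.mem_Icc] at hℓ hℓ'
    have ht : ℓ' - ℓ = (N:ℤ) * (a - a') := by linear_combination ha - ha'
    have hb1 : ℓ' - ℓ < N := by omega
    have hb2 : -(N:ℤ) < ℓ' - ℓ := by omega
    have key : a - a' = 0 := by
      by_contra hne
      have h1 : 1 ≤ a - a' ∨ a - a' ≤ -1 := by omega
      rcases h1 with h1 | h1
      · have h2 : (N:ℤ) * 1 ≤ (N:ℤ) * (a - a') := mul_le_mul_of_nonneg_left h1 hNpos.le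
        linarith
      · have h2 : (N:ℤ) * (a - a') ≤ (N:ℤ) * (-1) := mul_le_mul_of_nonneg_left h1 hNpos.le
        linarith
    have haa : a = a' := by omega
    rw [haa] at ha
    have h3 : k - ℓ = k - ℓ' := ha.trans ha'.symm
    omega
  have hex : ∀ k : ℤ, ∃ ℓ ∈ Λ, (N:ℤ) ∣ (k - ℓ) := by
    intro k
    refine ⟨(k + (N:ℤ)/2) % (N:ℤ) - (N:ℤ)/2, ?_, ?_⟩
    · have hm1 : 0 ≤ (k + (N:ℤ)/2) % (N:ℤ) := Int.emod_nonneg _ hNz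
      have hm2 : (k + (N:ℤ)/2) % (N:ℤ) < (N:ℤ) := Int.emod_lt_of_pos _ hNpos
      rw [hΛ, Finset.mem_Icc]
      generalize hr : (k + (N:ℤ)/2) % (N:ℤ) = r at hm1 hm2 ⊢
      omega
    · refine ⟨(k + (N:ℤ)/2) / (N:ℤ), ?_⟩
      rw [Int.emod_def]
      ring
  set D : ℤ → ℂ := fun ℓ => ∑' m : ℤ, if m = 0 then 0 else c (ℓ + (N:ℤ) * m) with hD
  set V : ℤ → ℝ := fun ℓ => ∑' m : ℤ, if m = 0 then 0 else ‖c (ℓ + (N:ℤ) * m)‖ with hV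
  set W : ℤ → ℝ := fun k => if k ∈ Λ then 0 else ‖c k‖ with hW
  have hscomp : ∀ ℓ : ℤ, Summable fun m : ℤ => ‖c (ℓ + (N:ℤ) * m)‖ :=
    fun ℓ => hsum.comp_injective (injN ℓ)
  have hsVm : ∀ ℓ : ℤ, Summable (fun m : ℤ => if m = 0 then 0 else ‖c (ℓ + (N:ℤ) * m)‖) := by
    intro ℓ
    apply Summable.of_nonneg_of_le (fun m => ?_) (fun m => ?_) (hscomp ℓ)
    · split_ifs <;> positivity
    · split_ifs <;> simp
  have htc2 : ∀ ℓ : ℤ, tc ℓ = c ℓ + D ℓ := by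
    intro ℓ
    have hs : Summable fun m : ℤ => c (ℓ + (N:ℤ) * m) := hsc.comp_injective (injN ℓ)
    rw [htc ℓ, Summable.tsum_eq_add_tsum_ite hs 0]
    simp only [hD]
    norm_num
  have hDV : ∀ ℓ : ℤ, ‖D ℓ‖ ≤ V ℓ := by
    intro ℓ
    simp only [hD, hV]
    refine le_trans (norm_tsum_le_tsum_norm ?_) (le_of_eq (tsum_congr fun m => ?_))
    · apply Summable.of_nonneg_of_le (fun m => norm_nonneg _) (fun m => ?_) (hsVm ℓ)
      split_ifs <;> simp
    · split_ifs <;> simp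
  have hs1 : Summable (fun k : ℤ => if k ∈ Λ then c k * E k else 0) := by
    apply Summable.of_norm_bounded hsum
    intro k
    split_ifs
    · rw [norm_mul, hE, mul_one]
    · simp
  have hs2 : Summable (fun k : ℤ => if k ∈ Λ then 0 else c k * E k) := by
    apply Summable.of_norm_bounded hsum
    intro k
    split_ifs
    · simp
    · rw [norm_mul, hE, mul_one]
  have hsplit : G = (∑ ℓ ∈ Λ, c ℓ * E ℓ) + ∑' k : ℤ, (if k ∈ Λ then 0 else c k * E k) := by
    rw [hG]
    have h1 : ∀ k : ℤ, c k * E k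
        = (if k ∈ Λ then c k * E k else 0) + (if k ∈ Λ then 0 else c k * E k) := by
      intro k
      split_ifs <;> simp
    rw [tsum_congr h1, Summable.tsum_add hs1 hs2,
      tsum_eq_sum (s := Λ) (f := fun k => if k ∈ Λ then c k * E k else 0)
        (fun k hk => if_neg hk)]
    congr 1
    exact Finset.sum_congr rfl fun k hk => if_pos hk
  have hA : ‖G - ∑ ℓ ∈ Λ, c ℓ * E ℓ‖ ≤ ∑' k : ℤ, W k := by
    have hGsub : G - ∑ ℓ ∈ Λ, c ℓ * E ℓ = ∑' k : ℤ, (if k ∈ Λ then 0 else c k * E k) := by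
      rw [hsplit]; ring
    rw [hGsub]
    refine le_trans (norm_tsum_le_tsum_norm ?_) (le_of_eq (tsum_congr fun k => ?_))
    · apply Summable.of_nonneg_of_le (fun k => norm_nonneg _) (fun k => ?_) hsum
      split_ifs
      · simp
      · rw [norm_mul, hE, mul_one]
    · simp only [hW]
      split_ifs with hkk
      · simp
      · rw [norm_mul, hE, mul_one]
  have hC : ∑' k : ℤ, W k = ∑ ℓ ∈ Λ, V ℓ := by
    set h : ℤ → ℤ → ℝ := fun ℓ k => if ((N:ℤ) ∣ (k - ℓ) ∧ k ≠ ℓ) then ‖c k‖ else 0 with hh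
    have hsh : ∀ ℓ : ℤ, Summable (h ℓ) := by
      intro ℓ
      apply Summable.of_nonneg_of_le (fun k => ?_) (fun k => ?_) hsum
      · simp only [hh]; split_ifs <;> positivity
      · simp only [hh]; split_ifs <;> simp
    have hVh : ∀ ℓ : ℤ, V ℓ = ∑' k : ℤ, h ℓ k := by
      intro ℓ
      have hsupp : Function.support (h ℓ) ⊆ Set.range (fun m : ℤ => ℓ + (N:ℤ) * m) := by
        intro k hk
        rw [Function.mem_support] at hk
        by_cases hdvd : (N:ℤ) ∣ (k - ℓ)
        · obtain ⟨m, hm⟩ := hdvd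
          exact ⟨m, by simp only []; linarith⟩
        · exfalso
          apply hk
          simp only [hh]
          exact if_neg fun hc => hdvd hc.1
      have heq := Function.Injective.tsum_eq (injN ℓ) hsupp
      simp only [hV]
      rw [← heq]
      apply tsum_congr
      intro m
      simp only [hh]
      by_cases hm : m = 0
      · subst hm; simp
      · have hne : ℓ + (N:ℤ) * m ≠ ℓ := by
          intro hcon
          apply hm
          have h0 : (N:ℤ) * m = 0 := by linarith
          exact (mul_eq_zero.mp h0).resolve_left hNz
        rw [if_neg hm, if_pos ⟨⟨m, by ring⟩, hne⟩]
    have hrow : ∀ k : ℤ, ∑ ℓ ∈ Λ, h ℓ k = W k := by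
      intro k
      by_cases hk : k ∈ Λ
      · simp only [hW]
        rw [if_pos hk]
        refine Finset.sum_eq_zero fun ℓ hℓ => ?_
        simp only [hh]
        rw [if_neg]
        rintro ⟨hdvd, hne⟩
        exact hne (huniq k ℓ k hℓ hk hdvd ⟨0, by ring⟩).symm
      · obtain ⟨ℓ₀, hℓ₀, hdvd₀⟩ := hex k
        rw [Finset.sum_eq_single_of_mem ℓ₀ hℓ₀ (fun ℓ hℓ hne => ?_)]
        · simp only [hh, hW]
          rw [if_neg hk, if_pos ⟨hdvd₀, fun hc => hk (hc ▸ hℓ₀)⟩]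
        · simp only [hh]
          rw [if_neg]
          rintro ⟨hdvd, _⟩
          exact hne (huniq k ℓ ℓ₀ hℓ hℓ₀ hdvd hdvd₀)
    calc ∑' k : ℤ, W k = ∑' k : ℤ, ∑ ℓ ∈ Λ, h ℓ k := tsum_congr fun k => (hrow k).symm
      _ = ∑ ℓ ∈ Λ, ∑' k : ℤ, h ℓ k := Summable.tsum_finsetSum fun ℓ _ => hsh ℓ
      _ = ∑ ℓ ∈ Λ, V ℓ := Finset.sum_congr rfl fun ℓ _ => (hVh ℓ).symm
  have hsumdec : ∑ ℓ ∈ Λ, tc ℓ * E ℓ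
      = (∑ ℓ ∈ Λ, c ℓ * E ℓ) + ∑ ℓ ∈ Λ, D ℓ * E ℓ := by
    rw [← Finset.sum_add_distrib]
    refine Finset.sum_congr rfl fun ℓ _ => ?_
    rw [htc2 ℓ]
    ring
  have hB : ‖∑ ℓ ∈ Λ, D ℓ * E ℓ‖ ≤ ∑ ℓ ∈ Λ, V ℓ := by
    refine le_trans (norm_sum_le _ _) (Finset.sum_le_sum fun ℓ _ => ?_)
    rw [norm_mul, hE, mul_one]
    exact hDV ℓ
  have hfinal : G - ∑ ℓ ∈ Λ, tc ℓ * E ℓ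
      = (G - ∑ ℓ ∈ Λ, c ℓ * E ℓ) - ∑ ℓ ∈ Λ, D ℓ * E ℓ := by
    rw [hsumdec]
    ring
  rw [hfinal]
  calc ‖(G - ∑ ℓ ∈ Λ, c ℓ * E ℓ) - ∑ ℓ ∈ Λ, D ℓ * E ℓ‖
      ≤ ‖G - ∑ ℓ ∈ Λ, c ℓ * E ℓ‖ + ‖∑ ℓ ∈ Λ, D ℓ * E ℓ‖ := norm_sub_le _ _
    _ ≤ (∑' k : ℤ, W k) + ∑ ℓ ∈ Λ, V ℓ := add_le_add hA hB
    _ = 2 * ∑ ℓ ∈ Λ, V ℓ := by rw [hC]; ring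

/-- (Trigonometric interpolation error bound.)  Let `g` be continuous, `b`-periodic, with
absolutely summable Fourier coefficients `c_ℓ(g)`, and let
`τ(g)(x) = ∑_{ℓ=-N/2}^{N/2-1} c̃_ℓ(g) e^{2πiℓx/b}` be the trigonometric interpolant of `g` at
the `N` equispaced points `jb/N`.  Then for all `x ∈ ℝ`,
`|g(x) - τ(g)(x)| ≤ 2·∑_{ℓ=-N/2}^{N/2-1} ∑_{m≠0} |c_{ℓ+Nm}(g)|`. -/
theorem trig_interp_error (b : ℝ) (hb : 0 < b) (g : ℝ → ℂ) (hcont : Continuous g)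
    (hper : ∀ x, g (x + b) = g x)
    (c : ℤ → ℂ)
    (hc : ∀ ℓ : ℤ, c ℓ = (1 / (b : ℂ)) * ∫ x in (0 : ℝ)..b,
      g x * Complex.exp (-2 * (Real.pi : ℂ) * Complex.I * (ℓ : ℂ) * (x : ℂ) / (b : ℂ)))
    (hsum : Summable fun ℓ : ℤ => ‖c ℓ‖)
    (hrepr : ∀ x : ℝ, g x =
      ∑' ℓ : ℤ, c ℓ * Complex.exp (2 * (Real.pi : ℂ) * Complex.I * (ℓ : ℂ) * (x : ℂ) / (b : ℂ)))
    (N : ℕ) (hN : 0 < N) (hNe : Even N) :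
    ∀ x : ℝ,
      ‖g x - ∑ ℓ ∈ Finset.Icc (-(N : ℤ) / 2) ((N : ℤ) / 2 - 1),
          ((1 / (N : ℂ)) * ∑ j ∈ Finset.range N, g ((j : ℝ) * b / (N : ℝ)) *
              Complex.exp (-2 * (Real.pi : ℂ) * Complex.I * (ℓ : ℂ) * (j : ℂ) / (N : ℂ))) *
            Complex.exp (2 * (Real.pi : ℂ) * Complex.I * (ℓ : ℂ) * (x : ℂ) / (b : ℂ))‖ ≤
        2 * ∑ ℓ ∈ Finset.Icc (-(N : ℤ) / 2) ((N : ℤ) / 2 - 1),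
          ∑' m : ℤ, if m = 0 then 0 else ‖c (ℓ + (N : ℤ) * m)‖ := by
  classical
  intro x
  have hNc : (N:ℂ) ≠ 0 := Nat.cast_ne_zero.mpr hN.ne'
  have hNz : (N:ℤ) ≠ 0 := by exact_mod_cast hN.ne'
  have hbc : (b:ℂ) ≠ 0 := Complex.ofReal_ne_zero.mpr hb.ne'
  -- aliasing identity
  have halias : ∀ ℓ : ℤ,
      (1 / (N : ℂ)) * ∑ j ∈ Finset.range N, g ((j : ℝ) * b / (N : ℝ)) *
          Complex.exp (-2 * (Real.pi : ℂ) * Complex.I * (ℓ : ℂ) * (j : ℂ) / (N : ℂ))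
        = ∑' m : ℤ, c (ℓ + (N:ℤ) * m) := by
    intro ℓ
    have injN : Function.Injective fun m : ℤ => ℓ + (N:ℤ) * m := by
      intro m m' h
      simp only at h
      exact mul_left_cancel₀ hNz (add_left_cancel h)
    have hsum2 : ∀ j : ℕ, Summable
        (fun k : ℤ => c k *
          Complex.exp (2 * (Real.pi:ℂ) * Complex.I * ((k:ℂ) - (ℓ:ℂ)) * (j:ℂ) / (N:ℂ))) := by
      intro j
      apply Summable.of_norm_bounded hsum
      intro k
      rw [norm_mul,
        norm_exp_one (2 * Real.pi * ((k:ℝ) - (ℓ:ℝ)) * (j:ℝ) / (N:ℝ)) (by push_cast; ring),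
        mul_one]
    have hstep1 : ∀ j ∈ Finset.range N, g ((j : ℝ) * b / (N : ℝ)) *
        Complex.exp (-2 * (Real.pi : ℂ) * Complex.I * (ℓ : ℂ) * (j : ℂ) / (N : ℂ))
        = ∑' k : ℤ, c k *
            Complex.exp (2 * (Real.pi:ℂ) * Complex.I * ((k:ℂ) - (ℓ:ℂ)) * (j:ℂ) / (N:ℂ)) := by
      intro j _
      rw [hrepr ((j : ℝ) * b / (N : ℝ)), ← tsum_mul_right]
      apply tsum_congr
      intro k
      rw [mul_assoc, ← Complex.exp_add]
      congr 2
      push_cast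
      field_simp
      ring
    rw [Finset.sum_congr rfl hstep1, ← Summable.tsum_finsetSum (fun j _ => hsum2 j)]
    have hstep2 : ∀ k : ℤ,
        (1 / (N:ℂ)) * ∑ j ∈ Finset.range N,
            c k * Complex.exp (2 * (Real.pi:ℂ) * Complex.I * ((k:ℂ) - (ℓ:ℂ)) * (j:ℂ) / (N:ℂ))
          = if (N:ℤ) ∣ (k - ℓ) then c k else 0 := by
      intro k
      have hexp : ∀ j ∈ Finset.range N,
          Complex.exp (2 * (Real.pi:ℂ) * Complex.I * ((k:ℂ) - (ℓ:ℂ)) * (j:ℂ) / (N:ℂ))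
            = Complex.exp (2 * (Real.pi:ℂ) * Complex.I * (((k - ℓ : ℤ)):ℂ) / (N:ℂ)) ^ j := by
        intro j _
        rw [← Complex.exp_nat_mul]
        congr 1
        push_cast
        ring
      rw [← Finset.mul_sum, Finset.sum_congr rfl hexp, trig_geom N hN (k - ℓ)]
      split_ifs with hd
      · field_simp
      · simp
    rw [tsum_mul_left.symm.trans (tsum_congr hstep2)]
    have hsupp : Function.support (fun k : ℤ => if (N:ℤ) ∣ (k - ℓ) then c k else 0)
        ⊆ Set.range (fun m : ℤ => ℓ + (N:ℤ) * m) := by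
      intro k hk
      rw [Function.mem_support] at hk
      by_cases hdvd : (N:ℤ) ∣ (k - ℓ)
      · obtain ⟨m, hm⟩ := hdvd
        exact ⟨m, by simp only []; linarith⟩
      · exact absurd (if_neg hdvd) hk
    rw [← Function.Injective.tsum_eq injN hsupp]
    apply tsum_congr
    intro m
    exact if_pos ⟨m, by ring⟩
  -- character norms
  have hE : ∀ k : ℤ,
      ‖Complex.exp (2 * (Real.pi : ℂ) * Complex.I * (k : ℂ) * (x : ℂ) / (b : ℂ))‖ = 1 := by
    intro k
    exact norm_exp_one (2 * Real.pi * (k:ℝ) * x / b) (by push_cast; ring)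
  exact trig_aux c hsum N hN hNe
    (fun k => Complex.exp (2 * (Real.pi : ℂ) * Complex.I * (k : ℂ) * (x : ℂ) / (b : ℂ))) hE
    (g x) (hrepr x)
    (fun ℓ => (1 / (N : ℂ)) * ∑ j ∈ Finset.range N, g ((j : ℝ) * b / (N : ℝ)) *
        Complex.exp (-2 * (Real.pi : ℂ) * Complex.I * (ℓ : ℂ) * (j : ℂ) / (N : ℂ)))
    halias
end

section
/- (Gram projection error) Let d ∈ ℕ, d ≥ 2, and ψ ∈ C^d([0,1]). Define the projection P_d(ψ)(x) = ∑_{ℓ=0}^{d−1} ⟨ψ, p_ℓ⟩·p_ℓ(x) where ⟨φ, p⟩ = ∑_{j=0}^{d-1} φ(jh)p(jh) and p_ℓ are the orthonormal Gram polynomials on the nodes 0, h, …, (d−1)h. Then there exists M > 0, independent of h ∈ (0, 1/(d−1)], such that for all 0 ≤ m ≤ d−1, sup_{x∈[0,(d−1)h]} |(P_d ψ)^{(m)}(x) − ψ^{(m)}(x)| ≤ M·h^{d−m}. -/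
open Polynomial Set Nat

/-- `p 0, …, p (d-1)` is the family of Gram polynomials for the nodes `ν 0, …, ν (d-1)`. -/
def IsGramFamily (d : ℕ) (ν : ℕ → ℝ) (p : ℕ → Polynomial ℝ) : Prop :=
  (∀ ℓ < d, (p ℓ).natDegree = ℓ ∧ 0 < (p ℓ).leadingCoeff) ∧
    ∀ k < d, ∀ ℓ < d,
      ∑ j ∈ Finset.range d, (p k).eval (ν j) * (p ℓ).eval (ν j) =
        if k = ℓ then 1 else 0

/- ### Auxiliary lemmas -/

lemma iterDW_comp {f : ℝ → ℝ} {s : Set ℝ} (hs : UniqueDiffOn ℝ s) (m : ℕ) :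
    ∀ k : ℕ, ∀ x ∈ s,
      iteratedDerivWithin k (iteratedDerivWithin m f s) s x = iteratedDerivWithin (k + m) f s x := by
  intro k
  induction k with
  | zero => intro x hx; simp
  | succ k IH =>
    intro x hx
    rw [iteratedDerivWithin_succ,
      derivWithin_congr (fun y hy => IH y hy) (IH x hx),
      ← iteratedDerivWithin_succ]
    ring_nf

lemma contDiffOn_iterDW {f : ℝ → ℝ} {s : Set ℝ} (hs : UniqueDiffOn ℝ s) {n : ℕ}
    (hf : ContDiffOn ℝ n f s) :
    ∀ m : ℕ, m ≤ n → ContDiffOn ℝ ((n - m : ℕ)) (iteratedDerivWithin m f s) s := by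
  intro m
  induction m with
  | zero => intro _; simpa using hf
  | succ m IH =>
    intro hm
    have h1 := IH (Nat.le_of_succ_le hm)
    have h2 : ContDiffOn ℝ ((n - (m+1) : ℕ)) (derivWithin (iteratedDerivWithin m f s) s) s := by
      apply h1.derivWithin hs
      have : (n - (m+1) : ℕ) + 1 = n - m := by omega
      exact_mod_cast this.le
    exact h2.congr fun x _ => congrFun iteratedDerivWithin_succ x

lemma iter_der_comp (q : Polynomial ℝ) (a : ℝ) (m : ℕ) :
    derivative^[m] (q.comp (C a * X)) = C (a^m) * (derivative^[m] q).comp (C a * X) := by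
  induction m with
  | zero => simp
  | succ m IH =>
    rw [Function.iterate_succ_apply', IH, derivative_C_mul, derivative_comp,
      Function.iterate_succ_apply']
    simp only [derivative_mul, derivative_C, derivative_X, zero_mul, mul_one, zero_add]
    rw [pow_succ, C_mul]
    ring

lemma basis_scale (d : ℕ) (h : ℝ) (hh : h ≠ 0) (j : ℕ) :
    Lagrange.basis (Finset.range d) (fun k => (k:ℝ) * h) j
      = (Lagrange.basis (Finset.range d) (fun k => (k:ℝ)) j).comp (C h⁻¹ * X) := by
  unfold Lagrange.basis
  rw [Polynomial.prod_comp]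
  refine Finset.prod_congr rfl fun k _ => ?_
  unfold Lagrange.basisDivisor
  have hk : h⁻¹ * ((k:ℝ)*h) = k := by field_simp
  have key : ((X : Polynomial ℝ) - C (k:ℝ)).comp (C h⁻¹ * X) = C h⁻¹ * (X - C ((k:ℝ)*h)) := by
    rw [sub_comp, X_comp, C_comp, mul_sub, ← C_mul, hk]
  rw [mul_comp, C_comp, key, ← mul_assoc, ← C_mul]
  simp only []
  congr 2
  rw [← sub_mul, mul_inv]

lemma poly_bound (p : Polynomial ℝ) (c : ℝ) :
    ∃ K, 0 ≤ K ∧ ∀ y ∈ Set.Icc (0:ℝ) c, |p.eval y| ≤ K := by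
  obtain ⟨C, hC⟩ := (isCompact_Icc (a := (0:ℝ)) (b := c)).exists_bound_of_continuousOn
    p.continuousOn
  exact ⟨max C 0, le_max_right _ _, fun y hy => le_trans (hC y hy) (le_max_left _ _)⟩

lemma family_bound (d : ℕ) (c : ℝ) (B : ℕ → ℕ → Polynomial ℝ) :
    ∃ K, 0 ≤ K ∧ ∀ j < d, ∀ m < d, ∀ y ∈ Set.Icc (0:ℝ) c, |(B j m).eval y| ≤ K := by
  classical
  choose K hK0 hK using fun j m => poly_bound (B j m) c
  refine ⟨∑ j ∈ Finset.range d, ∑ m ∈ Finset.range d, K j m,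
    Finset.sum_nonneg fun j _ => Finset.sum_nonneg fun m _ => hK0 j m,
    fun j hj m hm y hy => ?_⟩
  refine le_trans (hK j m y hy) ?_
  calc K j m ≤ ∑ m ∈ Finset.range d, K j m :=
        Finset.single_le_sum (fun i _ => hK0 j i) (Finset.mem_range.2 hm)
    _ ≤ _ := Finset.single_le_sum
        (fun i _ => Finset.sum_nonneg fun m _ => hK0 i m) (Finset.mem_range.2 hj)

lemma gram_transpose (d : ℕ) (ν : ℕ → ℝ) (p : ℕ → Polynomial ℝ)
    (horth : ∀ k < d, ∀ ℓ < d,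
      ∑ j ∈ Finset.range d, (p k).eval (ν j) * (p ℓ).eval (ν j) = if k = ℓ then 1 else 0) :
    ∀ i < d, ∀ j < d,
      ∑ ℓ ∈ Finset.range d, (p ℓ).eval (ν i) * (p ℓ).eval (ν j) = if i = j then 1 else 0 := by
  classical
  set A : Matrix (Fin d) (Fin d) ℝ := fun k j => (p k).eval (ν j) with hA
  have h1 : A * A.transpose = 1 := by
    ext k ℓ
    rw [Matrix.mul_apply, Matrix.one_apply]
    have := horth k k.2 ℓ ℓ.2
    rw [Finset.sum_range] at this
    simp only [Matrix.transpose_apply]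
    simp only [hA]
    rw [this]
    simp [Fin.ext_iff]
  have h2 : A.transpose * A = 1 := mul_eq_one_comm.mp h1
  intro i hi j hj
  have := congrArg (fun M => M ⟨i, hi⟩ ⟨j, hj⟩) h2
  simp only [Matrix.mul_apply, Matrix.one_apply, Matrix.transpose_apply] at this
  simp only [hA] at this
  rw [Finset.sum_range, this]
  simp [Fin.ext_iff]

lemma gram_proj_eq_interpolate (d : ℕ) (ν : ℕ → ℝ) (hν : Set.InjOn ν (Finset.range d))
    (p : ℕ → Polynomial ℝ)
    (hdeg : ∀ ℓ < d, (p ℓ).natDegree = ℓ ∧ 0 < (p ℓ).leadingCoeff)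
    (horth : ∀ i < d, ∀ j < d,
      ∑ ℓ ∈ Finset.range d, (p ℓ).eval (ν i) * (p ℓ).eval (ν j) = if i = j then 1 else 0)
    (ψ : ℝ → ℝ) :
    (∑ ℓ ∈ Finset.range d, (∑ j ∈ Finset.range d, ψ (ν j) * (p ℓ).eval (ν j)) • p ℓ)
      = Lagrange.interpolate (Finset.range d) ν (fun j => ψ (ν j)) := by
  refine Lagrange.eq_interpolate_of_eval_eq _ hν ?_ ?_
  · rw [Finset.card_range]
    refine lt_of_le_of_lt (Polynomial.degree_sum_le _ _) ?_
    rw [Finset.sup_lt_iff (by exact_mod_cast WithBot.bot_lt_coe d)]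
    intro ℓ hℓ
    refine lt_of_le_of_lt (Polynomial.degree_smul_le _ _) ?_
    refine lt_of_le_of_lt (Polynomial.degree_le_natDegree) ?_
    rw [(hdeg ℓ (Finset.mem_range.mp hℓ)).1]
    exact_mod_cast Finset.mem_range.mp hℓ
  · intro i hi
    rw [eval_finset_sum]
    simp only [eval_smul, smul_eq_mul]
    have key : ∑ ℓ ∈ Finset.range d,
          (∑ j ∈ Finset.range d, ψ (ν j) * eval (ν j) (p ℓ)) * eval (ν i) (p ℓ)
        = ∑ j ∈ Finset.range d, ψ (ν j) *
            (∑ ℓ ∈ Finset.range d, eval (ν j) (p ℓ) * eval (ν i) (p ℓ)) := by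
      simp_rw [Finset.sum_mul, Finset.mul_sum]
      rw [Finset.sum_comm]
      exact Finset.sum_congr rfl fun j _ => Finset.sum_congr rfl fun ℓ _ => by ring
    rw [key]
    have hterm : ∀ j ∈ Finset.range d, ψ (ν j) *
        (∑ ℓ ∈ Finset.range d, eval (ν j) (p ℓ) * eval (ν i) (p ℓ))
          = if j = i then ψ (ν j) else 0 := by
      intro j hj
      rw [horth j (Finset.mem_range.mp hj) i (Finset.mem_range.mp hi)]
      simp [mul_ite]
    rw [Finset.sum_congr rfl hterm, Finset.sum_ite_eq' (Finset.range d) i (fun j => ψ (ν j))]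
    simp [hi]

lemma taylor_deriv_eq (ψ : ℝ → ℝ) (d m : ℕ) (hd : 1 ≤ d) (hm : m ≤ d - 1)
    (s : Set ℝ) (hs : UniqueDiffOn ℝ s) (h0 : (0:ℝ) ∈ s) (y : ℝ) :
    (derivative^[m] (∑ k ∈ Finset.range d,
        C (iteratedDerivWithin k ψ s 0 / k !) * X ^ k)).eval y
      = taylorWithinEval (iteratedDerivWithin m ψ s) (d - 1 - m) s 0 y := by
  rw [taylor_within_apply]
  have hdm : d - 1 - m + 1 = d - m := by omega
  rw [hdm]
  rw [iterate_derivative_sum]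
  simp only [iterate_derivative_C_mul, iterate_derivative_X_pow_eq_C_mul]
  rw [eval_finset_sum]
  simp only [eval_mul, eval_C, eval_pow, eval_X]
  rw [Finset.range_eq_Ico, ← Finset.sum_Ico_consecutive _ (Nat.zero_le m) (by omega : m ≤ d)]
  have h1 : ∑ k ∈ Finset.Ico 0 m,
      iteratedDerivWithin k ψ s 0 / k ! * ((k.descFactorial m : ℝ) * y ^ (k - m)) = 0 := by
    refine Finset.sum_eq_zero fun k hk => ?_
    have : k.descFactorial m = 0 := Nat.descFactorial_eq_zero_iff_lt.mpr
      (Finset.mem_Ico.mp hk).2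
    rw [this]
    simp
  rw [h1, zero_add, Finset.sum_Ico_eq_sum_range]
  rw [show Finset.range (d - m) = Finset.Ico 0 (d - m) from Finset.range_eq_Ico _]
  refine Finset.sum_congr rfl fun i hi => ?_
  rw [smul_eq_mul, sub_zero, iterDW_comp hs m i 0 h0]
  have h2 : m + i - m = i := by omega
  rw [h2]
  have hfac : ((m + i).factorial : ℝ) = (i.factorial : ℝ) * ((m + i).descFactorial m : ℝ) := by
    have := Nat.factorial_mul_descFactorial (Nat.le_add_right m i)
    rw [Nat.add_sub_cancel_left] at this
    exact_mod_cast this.symm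
  have hi0 : (i.factorial : ℝ) ≠ 0 := Nat.cast_ne_zero.mpr i.factorial_ne_zero
  have hmi0 : ((m + i).factorial : ℝ) ≠ 0 := Nat.cast_ne_zero.mpr (m + i).factorial_ne_zero
  rw [show i + m = m + i from by omega]
  field_simp
  rw [hfac]
  ring

/- ### Main theorem -/

/-- (Gram projection error.)  For `ψ ∈ C^d([0,1])` and the Gram projection
`P_d(ψ) = ∑_{ℓ=0}^{d-1} ⟨ψ, p_ℓ⟩ p_ℓ` on the nodes `0, h, …, (d-1)h`, there is `M > 0`,
independent of `h ∈ (0, 1/(d-1)]`, with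
`sup_{x∈[0,(d-1)h]} |(P_d ψ)^{(m)}(x) - ψ^{(m)}(x)| ≤ M·h^{d-m}` for all `0 ≤ m ≤ d-1`. -/
theorem gram_projection_error (d : ℕ) (hd : 2 ≤ d) (ψ : ℝ → ℝ)
    (hψ : ContDiffOn ℝ d ψ (Set.Icc 0 1)) :
    ∃ M > 0, ∀ h : ℝ, 0 < h → h ≤ 1 / ((d : ℝ) - 1) →
      ∀ p : ℕ → Polynomial ℝ, IsGramFamily d (fun j => (j : ℝ) * h) p →
        ∀ m ≤ d - 1, ∀ x ∈ Set.Icc (0 : ℝ) (((d : ℝ) - 1) * h),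
          |(Polynomial.derivative^[m] (∑ ℓ ∈ Finset.range d,
                (∑ j ∈ Finset.range d, ψ ((j : ℝ) * h) * (p ℓ).eval ((j : ℝ) * h)) •
                  p ℓ)).eval x -
              iteratedDerivWithin m ψ (Set.Icc 0 1) x| ≤ M * h ^ (d - m) := by
  classical
  have hs1 : UniqueDiffOn ℝ (Set.Icc (0:ℝ) 1) := uniqueDiffOn_Icc one_pos
  have h0s : (0:ℝ) ∈ Set.Icc (0:ℝ) 1 := ⟨le_refl 0, zero_le_one⟩
  have hd1 : (1:ℝ) ≤ (d:ℝ) - 1 := by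
    have : (2:ℝ) ≤ d := by exact_mod_cast hd
    linarith
  have hd0 : ((d:ℝ) - 1) ≠ 0 := by linarith
  -- the uniform bound on the d-th derivative
  obtain ⟨C0, hC0⟩ := (isCompact_Icc (a := (0:ℝ)) (b := 1)).exists_bound_of_continuousOn
    (hψ.continuousOn_iteratedDerivWithin le_rfl hs1)
  set Cψ := max C0 0 with hCψdef
  have hCψ0 : 0 ≤ Cψ := le_max_right _ _
  have hCψ : ∀ y ∈ Set.Icc (0:ℝ) 1, ‖iteratedDerivWithin d ψ (Set.Icc (0:ℝ) 1) y‖ ≤ Cψ :=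
    fun y hy => le_trans (hC0 y hy) (le_max_left _ _)
  -- the uniform bound on the reference Lagrange basis derivatives
  obtain ⟨K, hK0, hK⟩ := family_bound d ((d:ℝ) - 1)
    (fun j m => derivative^[m] (Lagrange.basis (Finset.range d) (fun k => (k:ℝ)) j))
  have hDd : (0:ℝ) ≤ ((d:ℝ) - 1)^d := pow_nonneg (by linarith) d
  refine ⟨(d:ℝ) * Cψ * ((d:ℝ)-1)^d * K + Cψ * ((d:ℝ)-1)^d + 1, ?_, ?_⟩
  · have t1 : 0 ≤ (d:ℝ) * Cψ * ((d:ℝ)-1)^d * K :=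
      mul_nonneg (mul_nonneg (mul_nonneg (Nat.cast_nonneg d) hCψ0) hDd) hK0
    have t2 : 0 ≤ Cψ * ((d:ℝ)-1)^d := mul_nonneg hCψ0 hDd
    linarith
  intro h hh hhle p hpgram m hm x hx
  obtain ⟨hpdeg, hporth⟩ := hpgram
  have hmd : m < d := by omega
  have hmdle : m ≤ d := by omega
  have hD1h : ((d:ℝ)-1) * h ≤ 1 := by
    have := mul_le_mul_of_nonneg_left hhle (by linarith : (0:ℝ) ≤ (d:ℝ)-1)
    calc ((d:ℝ)-1) * h ≤ ((d:ℝ)-1) * (1 / ((d:ℝ)-1)) := this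
      _ = 1 := by field_simp
  have hx01 : x ∈ Set.Icc (0:ℝ) 1 := ⟨hx.1, le_trans hx.2 hD1h⟩
  have hν_mem : ∀ j < d, (j:ℝ) * h ∈ Set.Icc (0:ℝ) (((d:ℝ)-1)*h) := by
    intro j hj
    constructor
    · positivity
    · apply mul_le_mul_of_nonneg_right _ hh.le
      have : (j:ℝ) ≤ (d:ℝ) - 1 := by
        have : (j:ℝ) + 1 ≤ d := by exact_mod_cast hj
        linarith
      exact this
  have hν_s1 : ∀ j < d, (j:ℝ) * h ∈ Set.Icc (0:ℝ) 1 := fun j hj =>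
    ⟨(hν_mem j hj).1, le_trans (hν_mem j hj).2 hD1h⟩
  have hν_inj : Set.InjOn (fun j : ℕ => (j:ℝ) * h) (Finset.range d) := by
    intro a _ b _ hab
    simp only at hab
    field_simp [hh.ne'] at hab
    exact_mod_cast hab
  -- the Taylor polynomial
  set T : Polynomial ℝ := ∑ k ∈ Finset.range d,
    C (iteratedDerivWithin k ψ (Set.Icc (0:ℝ) 1) 0 / k !) * X ^ k with hTdef
  have hTd : ∀ m' ≤ d - 1, ∀ y : ℝ, (derivative^[m'] T).eval y
      = taylorWithinEval (iteratedDerivWithin m' ψ (Set.Icc (0:ℝ) 1)) (d - 1 - m')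
          (Set.Icc (0:ℝ) 1) 0 y :=
    fun m' hm' y => taylor_deriv_eq ψ d m' (by omega) hm' _ hs1 h0s y
  have hT0 : ∀ y : ℝ, T.eval y = taylorWithinEval ψ (d-1) (Set.Icc (0:ℝ) 1) 0 y := by
    intro y
    have := hTd 0 (Nat.zero_le _) y
    simpa [iteratedDerivWithin_zero] using this
  -- bound at the nodes
  have hnode : ∀ j < d, |ψ ((j:ℝ)*h) - T.eval ((j:ℝ)*h)| ≤ Cψ * ((d:ℝ)-1)^d * h^d := by
    intro j hj
    rw [hT0]
    have hmem := hν_s1 j hj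
    have hcd : ContDiffOn ℝ ((d - 1 : ℕ) + 1) ψ (Set.Icc (0:ℝ) 1) := by
      have : ((d - 1 : ℕ) : WithTop ℕ∞) + 1 = (d : WithTop ℕ∞) := by
        norm_cast
        omega
      rw [this]
      exact hψ
    have hb := taylor_mean_remainder_bound zero_le_one hcd hmem (fun y hy => by
      rw [show (d - 1 + 1 : ℕ) = d from by omega]
      exact hCψ y hy)
    rw [Real.norm_eq_abs] at hb
    refine le_trans hb ?_
    rw [sub_zero, show (d - 1 + 1 : ℕ) = d from by omega]
    have hνj := hν_mem j hj
    have hpow : ((j:ℝ)*h)^d ≤ (((d:ℝ)-1)*h)^d := pow_le_pow_left₀ hνj.1 hνj.2 d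
    have hfa : (1:ℝ) ≤ (d-1)! := by
      have := Nat.factorial_pos (d-1)
      exact_mod_cast this
    have hnum : (0:ℝ) ≤ Cψ * ((j:ℝ)*h)^d := mul_nonneg hCψ0 (pow_nonneg hνj.1 d)
    calc Cψ * ((j:ℝ)*h)^d / (d-1)! ≤ Cψ * ((j:ℝ)*h)^d := div_le_self hnum hfa
      _ ≤ Cψ * ((((d:ℝ)-1)*h)^d) := mul_le_mul_of_nonneg_left hpow hCψ0
      _ = Cψ * ((d:ℝ)-1)^d * h^d := by rw [mul_pow]; ring
  -- Taylor part at x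
  have hTaylorx : |(derivative^[m] T).eval x - iteratedDerivWithin m ψ (Set.Icc (0:ℝ) 1) x|
      ≤ Cψ * ((d:ℝ)-1)^d * h^(d-m) := by
    rw [hTd m hm x]
    have hcd : ContDiffOn ℝ ((d - 1 - m : ℕ) + 1)
        (iteratedDerivWithin m ψ (Set.Icc (0:ℝ) 1)) (Set.Icc (0:ℝ) 1) := by
      have h4 : ((d - 1 - m : ℕ) : WithTop ℕ∞) + 1 = ((d - m : ℕ) : WithTop ℕ∞) := by
        norm_cast
        omega
      rw [h4]
      exact contDiffOn_iterDW hs1 hψ m hmdle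
    have hbound : ∀ y ∈ Set.Icc (0:ℝ) 1,
        ‖iteratedDerivWithin ((d-1-m)+1) (iteratedDerivWithin m ψ (Set.Icc (0:ℝ) 1))
          (Set.Icc (0:ℝ) 1) y‖ ≤ Cψ := by
      intro y hy
      rw [show (d-1-m)+1 = d - m from by omega, iterDW_comp hs1 m (d-m) y hy,
        show d - m + m = d from by omega]
      exact hCψ y hy
    have hb := taylor_mean_remainder_bound zero_le_one hcd hx01 hbound
    rw [Real.norm_eq_abs, abs_sub_comm] at hb
    refine le_trans hb ?_
    rw [sub_zero, show (d-1-m)+1 = d - m from by omega]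
    have hpow : x^(d-m) ≤ (((d:ℝ)-1)*h)^(d-m) := pow_le_pow_left₀ hx.1 hx.2 (d-m)
    have hfa : (1:ℝ) ≤ (d-1-m)! := by
      have := Nat.factorial_pos (d-1-m)
      exact_mod_cast this
    have hnum : (0:ℝ) ≤ Cψ * x^(d-m) := mul_nonneg hCψ0 (pow_nonneg hx.1 _)
    have hmono : ((d:ℝ)-1)^(d-m) ≤ ((d:ℝ)-1)^d := pow_le_pow_right₀ hd1 (by omega)
    have hhp : (0:ℝ) ≤ h^(d-m) := pow_nonneg hh.le _
    calc Cψ * x^(d-m) / (d-1-m)! ≤ Cψ * x^(d-m) := div_le_self hnum hfa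
      _ ≤ Cψ * ((((d:ℝ)-1)*h)^(d-m)) := mul_le_mul_of_nonneg_left hpow hCψ0
      _ = Cψ * ((d:ℝ)-1)^(d-m) * h^(d-m) := by rw [mul_pow]; ring
      _ ≤ Cψ * ((d:ℝ)-1)^d * h^(d-m) := by
          apply mul_le_mul_of_nonneg_right _ hhp
          exact mul_le_mul_of_nonneg_left hmono hCψ0
  -- the projection equals the Lagrange interpolant
  have hP : (∑ ℓ ∈ Finset.range d,
        (∑ j ∈ Finset.range d, ψ ((j:ℝ)*h) * (p ℓ).eval ((j:ℝ)*h)) • p ℓ)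
      = Lagrange.interpolate (Finset.range d) (fun j : ℕ => (j:ℝ)*h)
          (fun j => ψ ((j:ℝ)*h)) :=
    gram_proj_eq_interpolate d _ hν_inj p hpdeg
      (gram_transpose d _ p hporth) ψ
  have hTdeg : T.degree < (Finset.range d).card := by
    rw [Finset.card_range]
    refine lt_of_le_of_lt (Polynomial.degree_sum_le _ _) ?_
    rw [Finset.sup_lt_iff (by exact_mod_cast WithBot.bot_lt_coe d)]
    intro k hk
    refine lt_of_le_of_lt (Polynomial.degree_mul_le _ _) ?_
    refine lt_of_le_of_lt (add_le_add Polynomial.degree_C_le (Polynomial.degree_X_pow _).le) ?_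
    rw [zero_add]
    exact_mod_cast Finset.mem_range.mp hk
  have hTi : T = Lagrange.interpolate (Finset.range d) (fun j : ℕ => (j:ℝ)*h)
      (fun j => T.eval ((j:ℝ)*h)) :=
    Lagrange.eq_interpolate hν_inj hTdeg
  -- difference as sum of basis polynomials
  have hsub : (∑ ℓ ∈ Finset.range d,
        (∑ j ∈ Finset.range d, ψ ((j:ℝ)*h) * (p ℓ).eval ((j:ℝ)*h)) • p ℓ) - T
      = ∑ j ∈ Finset.range d, C (ψ ((j:ℝ)*h) - T.eval ((j:ℝ)*h)) *
          Lagrange.basis (Finset.range d) (fun k : ℕ => (k:ℝ)*h) j := by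
    rw [hP]
    nth_rewrite 1 [hTi]
    rw [← map_sub]
    rw [Lagrange.interpolate_apply]
    rfl
  -- evaluate the m-th derivative of the interpolation error
  have hbasis : ∀ j : ℕ, derivative^[m] (Lagrange.basis (Finset.range d)
        (fun k : ℕ => (k:ℝ)*h) j)
      = C ((h⁻¹)^m) * (derivative^[m] (Lagrange.basis (Finset.range d)
          (fun k => (k:ℝ)) j)).comp (C h⁻¹ * X) := by
    intro j
    rw [basis_scale d h hh.ne' j, iter_der_comp]
  have hkey : (derivative^[m] (∑ ℓ ∈ Finset.range d,
        (∑ j ∈ Finset.range d, ψ ((j:ℝ)*h) * (p ℓ).eval ((j:ℝ)*h)) • p ℓ)).eval x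
        - (derivative^[m] T).eval x
      = ∑ j ∈ Finset.range d, (ψ ((j:ℝ)*h) - T.eval ((j:ℝ)*h)) *
          ((h⁻¹)^m * (derivative^[m] (Lagrange.basis (Finset.range d)
            (fun k => (k:ℝ)) j)).eval (h⁻¹ * x)) := by
    rw [← Polynomial.eval_sub, ← Polynomial.iterate_derivative_sub, hsub,
      iterate_derivative_sum]
    rw [eval_finset_sum]
    refine Finset.sum_congr rfl fun j _ => ?_
    rw [iterate_derivative_C_mul, hbasis j]
    simp only [eval_mul, eval_C, eval_comp, eval_mul, eval_C, eval_X]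
  -- bound the interpolation part
  have hxh : h⁻¹ * x ∈ Set.Icc (0:ℝ) ((d:ℝ)-1) := by
    constructor
    · exact mul_nonneg (inv_nonneg.mpr hh.le) hx.1
    · have := mul_le_mul_of_nonneg_left hx.2 (inv_nonneg.mpr hh.le)
      calc h⁻¹ * x ≤ h⁻¹ * (((d:ℝ)-1)*h) := this
        _ = (d:ℝ)-1 := by
            rw [mul_comm (h⁻¹), mul_assoc, mul_inv_cancel₀ hh.ne', mul_one]
  have hinterp : |(derivative^[m] (∑ ℓ ∈ Finset.range d,
        (∑ j ∈ Finset.range d, ψ ((j:ℝ)*h) * (p ℓ).eval ((j:ℝ)*h)) • p ℓ)).eval x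
        - (derivative^[m] T).eval x|
      ≤ (d:ℝ) * Cψ * ((d:ℝ)-1)^d * K * h^(d-m) := by
    rw [hkey]
    refine le_trans (Finset.abs_sum_le_sum_abs _ _) ?_
    have hip : (0:ℝ) ≤ (h⁻¹)^m := by positivity
    have hterm : ∀ j ∈ Finset.range d,
        |(ψ ((j:ℝ)*h) - T.eval ((j:ℝ)*h)) *
          ((h⁻¹)^m * (derivative^[m] (Lagrange.basis (Finset.range d)
            (fun k => (k:ℝ)) j)).eval (h⁻¹ * x))|
          ≤ (Cψ * ((d:ℝ)-1)^d * h^d) * ((h⁻¹)^m * K) := by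
      intro j hj
      rw [abs_mul, abs_mul, abs_of_nonneg hip]
      have h1 := hnode j (Finset.mem_range.mp hj)
      have h2 := hK j (Finset.mem_range.mp hj) m hmd (h⁻¹*x) hxh
      have hb1 : (0:ℝ) ≤ Cψ * ((d:ℝ)-1)^d * h^d :=
        mul_nonneg (mul_nonneg hCψ0 hDd) (pow_nonneg hh.le d)
      exact mul_le_mul h1 (mul_le_mul_of_nonneg_left h2 hip)
        (mul_nonneg hip (abs_nonneg _)) hb1
    refine le_trans (Finset.sum_le_sum hterm) ?_
    rw [Finset.sum_const, Finset.card_range, nsmul_eq_mul]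
    have hpowh : h^d * (h⁻¹)^m = h^(d-m) := by
      have h1 : h^(d-m) * h^m = h^d := by
        rw [← pow_add]
        congr 1
        omega
      rw [inv_pow, eq_comm, ← h1]
      field_simp
    refine le_of_eq ?_
    calc (d:ℝ) * ((Cψ * ((d:ℝ)-1)^d * h^d) * ((h⁻¹)^m * K))
        = (d:ℝ) * Cψ * ((d:ℝ)-1)^d * K * (h^d * (h⁻¹)^m) := by ring
      _ = (d:ℝ) * Cψ * ((d:ℝ)-1)^d * K * h^(d-m) := by rw [hpowh]
  -- conclusion
  have hhp : (0:ℝ) ≤ h^(d-m) := pow_nonneg hh.le _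
  calc |(derivative^[m] (∑ ℓ ∈ Finset.range d,
        (∑ j ∈ Finset.range d, ψ ((j:ℝ)*h) * (p ℓ).eval ((j:ℝ)*h)) • p ℓ)).eval x
        - iteratedDerivWithin m ψ (Set.Icc (0:ℝ) 1) x|
      ≤ |(derivative^[m] (∑ ℓ ∈ Finset.range d,
          (∑ j ∈ Finset.range d, ψ ((j:ℝ)*h) * (p ℓ).eval ((j:ℝ)*h)) • p ℓ)).eval x
          - (derivative^[m] T).eval x|
        + |(derivative^[m] T).eval x - iteratedDerivWithin m ψ (Set.Icc (0:ℝ) 1) x| :=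
        abs_sub_le _ _ _
    _ ≤ (d:ℝ) * Cψ * ((d:ℝ)-1)^d * K * h^(d-m) + Cψ * ((d:ℝ)-1)^d * h^(d-m) :=
        add_le_add hinterp hTaylorx
    _ ≤ ((d:ℝ) * Cψ * ((d:ℝ)-1)^d * K + Cψ * ((d:ℝ)-1)^d + 1) * h^(d-m) := by
        nlinarith [hhp]
end
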